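/- With notation as follows: U_k : V → ℝ smooth (V ⊆ ℝ^N open, k = 1,…,n), κ_{ak} : V → ℝ with κ_{a1} = 1, v_a = ∂_a U_1 nowhere zero, and ∂_a U_k = κ_{ak} v_a for all a, k. Suppose the compatibility condition ∂_a κ_{bk} = γ_{ba}(κ_{ak} − κ_{bk}) holds for all a ≠ b and all k, where ∂_a∂_b U_1 = γ_{ab} v_a + γ_{ba} v_b. Then for all a ≠ b and all k: ∂_a∂_b U_k = γ_{ab}(v_a/v_b) ∂_b U_k + γ_{ba}(v_b/v_a) ∂_a U_k; in particular each second derivative ∂_a∂_b U lies in the span of ∂_a U and ∂_b U (the net is conjugate). -/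

import Mathlib

/-- Partial derivative `∂/∂r_a` of a function on `ℝ^N`. -/
noncomputable def pd {N : ℕ} {F : Type*} [NormedAddCommGroup F] [NormedSpace ℝ F]
    (a : Fin N) (f : (Fin N → ℝ) → F) (x : Fin N → ℝ) : F :=
  fderiv ℝ f x (Pi.single a 1)


lemma pd_congr_open {N : ℕ} {V : Set (Fin N → ℝ)} (hV : IsOpen V)
    {f g : (Fin N → ℝ) → ℝ} (h : ∀ y ∈ V, f y = g y) {x : Fin N → ℝ} (hx : x ∈ V)
    (a : Fin N) : pd a f x = pd a g x := by
  have hfg : f =ᶠ[nhds x] g := Filter.eventuallyEq_of_mem (hV.mem_nhds hx) h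
  unfold pd
  rw [hfg.fderiv_eq]

lemma pd_mul {N : ℕ} (a : Fin N) {f g : (Fin N → ℝ) → ℝ} {x : Fin N → ℝ}
    (hf : DifferentiableAt ℝ f x) (hg : DifferentiableAt ℝ g x) :
    pd a (fun y => f y * g y) x = pd a f x * g x + f x * pd a g x := by
  unfold pd
  rw [fderiv_fun_mul hf hg]
  simp
  ring

/-- Forward direction of the final step of Theorem 1.2 (rank-one case): hydrodynamic
compatibility `∂_a κ_{bk} = γ_{ba}(κ_{ak} − κ_{bk})` implies the net is conjugate:
`∂_a∂_b U_k = γ_{ab}(v_a/v_b) ∂_b U_k + γ_{ba}(v_b/v_a) ∂_a U_k`. -/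
theorem compatibility_implies_conjugate_net {N n : ℕ}
    (V : Set (Fin N → ℝ)) (hV : IsOpen V)
    (U : Fin n → (Fin N → ℝ) → ℝ)
    (v : Fin N → (Fin N → ℝ) → ℝ)
    (κ : Fin N → Fin n → (Fin N → ℝ) → ℝ)
    (γ : Fin N → Fin N → (Fin N → ℝ) → ℝ)
    (k1 : Fin n)
    (hU : ∀ k, ContDiff ℝ (⊤ : ℕ∞) (U k)) (hv : ∀ a, ContDiff ℝ (⊤ : ℕ∞) (v a))
    (hκs : ∀ a k, ContDiff ℝ (⊤ : ℕ∞) (κ a k))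
    (hκ1 : ∀ a, ∀ x ∈ V, κ a k1 x = 1)
    (hvdef : ∀ a, ∀ x ∈ V, v a x = pd a (U k1) x)
    (hvne : ∀ a, ∀ x ∈ V, v a x ≠ 0)
    (hsys : ∀ a k, ∀ x ∈ V, pd a (U k) x = κ a k x * v a x)
    (hcompat : ∀ a b, a ≠ b → ∀ k, ∀ x ∈ V,
      pd a (κ b k) x = γ b a x * (κ a k x - κ b k x))
    (hU1 : ∀ a b, a ≠ b → ∀ x ∈ V,
      pd a (pd b (U k1)) x = γ a b x * v a x + γ b a x * v b x) :
    ∀ a b, a ≠ b → ∀ k, ∀ x ∈ V,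
      pd a (pd b (U k)) x
        = γ a b x * (v a x / v b x) * pd b (U k) x
          + γ b a x * (v b x / v a x) * pd a (U k) x := by
  intro a b hab k x hx
  have hkv : ∀ y ∈ V, pd b (U k) y = (fun y => κ b k y * v b y) y := hsys b k
  have h1 : pd a (pd b (U k)) x = pd a (fun y => κ b k y * v b y) x :=
    pd_congr_open hV hkv hx a
  have h2 : pd a (fun y => κ b k y * v b y) x
      = pd a (κ b k) x * v b x + κ b k x * pd a (v b) x :=
    pd_mul a ((hκs b k).differentiable (by simp) x) ((hv b).differentiable (by simp) x)
  have h3 : pd a (v b) x = pd a (pd b (U k1)) x :=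
    pd_congr_open hV (hvdef b) hx a
  have h4 := hU1 a b hab x hx
  have h5 := hcompat a b hab k x hx
  have h6 := hsys b k x hx
  have h7 := hsys a k x hx
  rw [h1, h2, h3, h4, h5, h6, h7]
  field_simp [hvne a x hx, hvne b x hx]
  ring
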